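/- Let M be an IB-homogeneous relational structure (graph), A and B finite graphs in the age of M, and let i, i' : A → M and e, e' : B → M be embeddings. If a monomorphism f : A → B is represented in the bimorphism monoid of M over the pair (i, e), then it is also represented over the pair (i', e'). That is, representability of a monomorphism between members of the age depends only on the isomorphism types, not on the chosen embeddings. -/

import Mathlib

/-- A bimorphism of a graph: a bijective edge-preserving self-map. -/
def IsBimorphism {V : Type*} (G : SimpleGraph V) (F : V → V) : Prop :=
  Function.Bijective F ∧ ∀ u v, G.Adj u v → G.Adj (F u) (F v)

/-- A partial isomorphism of `G` with finite domain `S`. -/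
def IsPartialIso {V : Type*} (G : SimpleGraph V) (S : Finset V) (f : V → V) : Prop :=
  Set.InjOn f S ∧ ∀ u ∈ S, ∀ v ∈ S, (G.Adj u v ↔ G.Adj (f u) (f v))

/-- `G` is IB-homogeneous: every isomorphism between finite induced subgraphs
extends to a bimorphism of `G`. -/
def IBHom {V : Type*} (G : SimpleGraph V) : Prop :=
  ∀ (S : Finset V) (f : V → V), IsPartialIso G S f →
    ∃ F : V → V, IsBimorphism G F ∧ ∀ x ∈ S, F x = f x

/-- `G` represents the monomorphism `m`: some bimorphism maps a nonedge to an edge. -/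
def RepM {V : Type*} (G : SimpleGraph V) : Prop :=
  ∃ F : V → V, IsBimorphism G F ∧
    ∃ u v : V, u ≠ v ∧ ¬ G.Adj u v ∧ G.Adj (F u) (F v)

/-- An independent set: pairwise nonadjacent vertices. -/
def IsIndep {V : Type*} (G : SimpleGraph V) (s : Set V) : Prop :=
  s.Pairwise fun u v => ¬ G.Adj u v

/-!
A bimorphism representing `f` over `(i, e)` can be conjugated into one over `(i', e')`:
IB-homogeneity extends the isomorphisms `i' a ↦ i a` and `e b ↦ e' b` between finite induced
subgraphs to bimorphisms, and bimorphisms are closed under composition.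
-/

section

variable {V : Type*} {M : SimpleGraph V}

theorem IsBimorphism.comp {F G : V → V} (hF : IsBimorphism M F) (hG : IsBimorphism M G) :
    IsBimorphism M (F ∘ G) :=
  ⟨hF.1.comp hG.1, fun _ _ h => hF.2 _ _ (hG.2 _ _ h)⟩

theorem IBHom.exists_bimorphism_extending_embedding {α : Type*} [Finite α] (hM : IBHom M)
    {A : SimpleGraph α} (j k : A ↪g M) :
    ∃ F : V → V, IsBimorphism M F ∧ ∀ a : α, F (j a) = k a := by
  -- `g` is the isomorphism `j a ↦ k a` between the two copies of `A`.
  set g : V → V := Function.extend j k id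
  have hg : ∀ a, g (j a) = k a := j.injective.extend_apply k id
  have hpi : IsPartialIso M (Set.finite_range j).toFinset g := by
    simp only [IsPartialIso, Set.Finite.coe_toFinset, Set.Finite.mem_toFinset,
      Set.forall_mem_range, hg, j.map_adj_iff, k.map_adj_iff, iff_self, implies_true, and_true]
    rintro _ ⟨a, rfl⟩ _ ⟨b, rfl⟩ hab
    rw [hg, hg] at hab
    exact congrArg j (k.injective hab)
  obtain ⟨F, hF, hFg⟩ := hM _ g hpi
  exact ⟨F, hF, fun a => by rw [hFg _ (by simp), hg]⟩

end

theorem stmt15_general {V α β : Type*} [Fintype α] [Fintype β] (M : SimpleGraph V) (hM : IBHom M)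
    (A : SimpleGraph α) (B : SimpleGraph β)
    (i i' : A ↪g M) (e e' : B ↪g M)
    (f : A →g B)
    (hrep : ∃ F : V → V, IsBimorphism M F ∧ ∀ a : α, F (i a) = e (f a)) :
    ∃ F : V → V, IsBimorphism M F ∧ ∀ a : α, F (i' a) = e' (f a) := by
  obtain ⟨F, hF, hFi⟩ := hrep
  obtain ⟨G, hG, hGi⟩ := hM.exists_bimorphism_extending_embedding i' i
  obtain ⟨H, hH, hHe⟩ := hM.exists_bimorphism_extending_embedding e e'
  exact ⟨H ∘ F ∘ G, hH.comp (hF.comp hG), fun a => by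
    simp only [Function.comp_apply, hGi, hFi, hHe]⟩

/-- Representability of a monomorphism between members of the age of an IB-homogeneous
graph does not depend on the chosen embeddings. -/
theorem stmt15 {V α β : Type*} [Fintype α] [Fintype β] (M : SimpleGraph V) (hM : IBHom M)
    (A : SimpleGraph α) (B : SimpleGraph β)
    (i i' : A ↪g M) (e e' : B ↪g M)
    (f : A →g B) (hf : Function.Injective f)
    (hrep : ∃ F : V → V, IsBimorphism M F ∧ ∀ a : α, F (i a) = e (f a)) :
    ∃ F : V → V, IsBimorphism M F ∧ ∀ a : α, F (i' a) = e' (f a) :=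
  stmt15_general M hM A B i i' e e' f hrep
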